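/- Let A(x) = Γ(x+1) (the real Gamma function) and B(x) = cos(x), and for each real a let U_a be the L₁-iterated sequence of (A, B) with initial value a. Then for every real a the sequence U_a is not eventually periodic: there do not exist a positive integer p and an index N such that U_a(n+p) = U_a(n) for all n ≥ N. -/

import Mathlib

/-!
Suppose `U = L1Seq A B a` satisfies `U (n + p) = U n` for `n ≥ N`. At an index `n ≥ N` where the
Thue–Morse word differs from its shift by `p`, one of `U (n + 1)`, `U (n + p + 1)` is `A (U n)` and
the other `B (U n)`, so `Γ (U n + 1) = cos (U n) = U (n + 1)`. Such indices exist in every residue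
class mod `p`. Choosing them in three consecutive classes `n₁, n₁ + 1, n₁ + 2` gives
`U n₃ = cos (cos (U n₁)) ∈ [1/2, 1]`, where convexity of `Γ` and the Taylor bound for `cos` show
`cos z < Γ (z + 1)`. Two `cos` steps are needed to stay away from the solution `Γ (0 + 1) = cos 0`.
-/

/-- The Thue–Morse sequence: `thueMorse n` is `true` iff the number of `1`s in
the binary expansion of `n` is odd. -/
def thueMorse (n : ℕ) : Bool := decide (Odd ((Nat.digits 2 n).count 1))

/-- The L₁-iterated sequence of a pair of maps `(A, B)` with initial value `a`. -/
def L1Seq (A B : ℝ → ℝ) (a : ℝ) : ℕ → ℝ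
  | 0 => a
  | n + 1 => if thueMorse n then B (L1Seq A B a n) else A (L1Seq A B a n)

open Real

theorem thueMorse_add_two_pow_mul {L w : ℕ} (hw : w < 2 ^ L) (m : ℕ) :
    thueMorse (w + 2 ^ L * m) = (thueMorse w ^^ thueMorse m) := by
  rcases Nat.eq_zero_or_pos m with rfl | hm
  · simp [thueMorse]
  obtain ⟨k, rfl⟩ := Nat.exists_eq_add_of_le ((Nat.digits_length_le_iff one_lt_two w).2 hw)
  unfold thueMorse
  rw [← Nat.digits_append_zeroes_append_digits one_lt_two hm]
  simp only [List.count_append, List.count_replicate]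
  grind

theorem thueMorse_one : thueMorse 1 = true := by simp [thueMorse]

theorem thueMorse_ne_add_succ_self (n : ℕ) : thueMorse n ≠ thueMorse (n + (n + 1)) := by
  rw [show n + (n + 1) = 1 + 2 ^ 1 * n by ring, thueMorse_add_two_pow_mul (by norm_num),
    thueMorse_one]
  simp

theorem thueMorse_ne_add_of_add_two_pow_mul {L w p : ℕ} (hw : w + p < 2 ^ L)
    (h : thueMorse w ≠ thueMorse (w + p)) (m : ℕ) :
    thueMorse (w + 2 ^ L * m) ≠ thueMorse (w + 2 ^ L * m + p) := by
  rw [add_right_comm, thueMorse_add_two_pow_mul hw, thueMorse_add_two_pow_mul (by omega)]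
  simpa using h

theorem thueMorse_ne_add_of_two_pow_mul_add {L e n q : ℕ} (he : e < 2 ^ L)
    (h : thueMorse n ≠ thueMorse (n + q)) :
    thueMorse (e + 2 ^ L * n) ≠ thueMorse (e + 2 ^ L * n + 2 ^ L * q) := by
  rw [add_assoc, ← mul_add, thueMorse_add_two_pow_mul he, thueMorse_add_two_pow_mul he]
  simpa using h

/-- For odd `p`, the mismatch at `p - 1` is shifted by multiples of a large power of two, which is
a unit mod `p`; an even period is halved. -/
theorem exists_thueMorse_ne_add_of_modEq {p : ℕ} (hp : 0 < p) (N r : ℕ) :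
    ∃ n, N ≤ n ∧ n ≡ r [MOD p] ∧ thueMorse n ≠ thueMorse (n + p) := by
  induction p using Nat.strong_induction_on generalizing N r with
  | _ p ih =>
  obtain ⟨q, rfl | rfl⟩ := Nat.even_or_odd' p
  · obtain ⟨n, hn, hmod, hne⟩ := ih q (by omega) (by omega) N (r / 2)
    refine ⟨r % 2 + 2 ^ 1 * n, by omega, ?_, thueMorse_ne_add_of_two_pow_mul_add (by omega) hne⟩
    calc r % 2 + 2 ^ 1 * n ≡ r % 2 + 2 * (r / 2) [MOD 2 * q] := (hmod.mul_left' 2).add_left _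
      _ = r := Nat.mod_add_div r 2
  · set L := N + 4 * q + 2
    have hL : L < 2 ^ L := Nat.lt_two_pow_self
    have hNL : N < 2 ^ L := by omega
    have hcop : Nat.Coprime (2 ^ L) (2 * q + 1) :=
      Nat.Coprime.pow_left L (Nat.coprime_two_left.2 (odd_two_mul_add_one q))
    obtain ⟨m, -, hm⟩ := Nat.exists_mul_mod_eq_of_coprime (r + 1) hcop (by omega)
    refine ⟨2 * q + 2 ^ L * (m + (2 * q + 1)), by nlinarith, ?_,
      thueMorse_ne_add_of_add_two_pow_mul (by omega) (thueMorse_ne_add_succ_self (2 * q)) _⟩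
    have hm' : ((2 ^ L * m : ℕ) : ZMod (2 * q + 1)) = ((r + 1 : ℕ) : ZMod (2 * q + 1)) :=
      (ZMod.natCast_eq_natCast_iff _ _ _).2 hm
    have hp0 : ((2 * q + 1 : ℕ) : ZMod (2 * q + 1)) = 0 := ZMod.natCast_self _
    rw [← ZMod.natCast_eq_natCast_iff]
    push_cast at hm' hp0 ⊢
    linear_combination hm' + (1 + 2 ^ L) * hp0

theorem eq_of_modEq_of_forall_add_eq {α : Type*} {u : ℕ → α} {p N m n : ℕ}
    (hper : ∀ n, N ≤ n → u (n + p) = u n) (hm : N ≤ m) (hn : N ≤ n) (h : m ≡ n [MOD p]) :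
    u m = u n := by
  wlog hmn : m ≤ n generalizing m n
  · exact (this hn hm h.symm (by omega)).symm
  obtain ⟨k, hk⟩ := (Nat.modEq_iff_dvd' hmn).1 h
  have hshift : ∀ j, u (m + p * j) = u m := fun j => by
    induction j with
    | zero => simp
    | succ j ih => rw [mul_add_one, ← add_assoc, hper _ (le_add_right hm), ih]
  rw [show n = m + p * k by omega, hshift]

theorem L1Seq_succ_eq_of_thueMorse_ne {A B : ℝ → ℝ} {a : ℝ} {p N n : ℕ}
    (hper : ∀ n, N ≤ n → L1Seq A B a (n + p) = L1Seq A B a n) (hn : N ≤ n)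
    (hne : thueMorse n ≠ thueMorse (n + p)) :
    L1Seq A B a (n + 1) = A (L1Seq A B a n) ∧ L1Seq A B a (n + 1) = B (L1Seq A B a n) := by
  have hsucc := hper (n + 1) (by omega)
  rw [add_right_comm] at hsucc
  simp only [L1Seq, hper n hn] at hsucc ⊢
  cases h : thueMorse n <;> cases h' : thueMorse (n + p) <;> simp_all

theorem half_le_cos_cos (x : ℝ) : 1 / 2 ≤ cos (cos x) := by
  nlinarith [one_sub_sq_div_two_le_cos (x := cos x), cos_sq_le_one x]

theorem Gamma_three_div_two : Gamma (3 / 2) = √π / 2 := by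
  rw [show (3 / 2 : ℝ) = 1 / 2 + 1 by norm_num, Gamma_add_one (by norm_num), Gamma_one_half_eq]
  ring

/-- The secant of `Γ` through `1` and `3 / 2`, extended to the right, lies below `Γ`. -/
theorem secant_le_Gamma_add_one {z : ℝ} (hz : 1 / 2 ≤ z) :
    √π / 2 + (√π - 2) * (z - 1 / 2) ≤ Gamma (z + 1) := by
  rcases hz.eq_or_lt with rfl | hz
  · norm_num [Gamma_three_div_two]
  have hslope := convexOn_Gamma.slope_mono_adjacent (Set.mem_Ioi.2 one_pos)
    (Set.mem_Ioi.2 (by linarith : (0 : ℝ) < z + 1)) (by norm_num : (1 : ℝ) < 3 / 2)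
    (by linarith : (3 / 2 : ℝ) < z + 1)
  rw [Gamma_one, Gamma_three_div_two, le_div_iff₀ (by linarith),
    show (√π / 2 - 1) / (3 / 2 - 1) = √π - 2 by ring] at hslope
  linarith

theorem cos_lt_Gamma_add_one {z : ℝ} (h₁ : 1 / 2 ≤ z) (h₂ : z ≤ 1) : cos z < Gamma (z + 1) := by
  have hπ : 1.772 < √π := by
    rw [lt_sqrt (by norm_num)]
    linarith [pi_gt_d6]
  have hcos : cos z ≤ 1 - z ^ 2 / 2 + z ^ 4 * (5 / 96) := by
    have := cos_bound (x := z) (by rw [abs_le]; constructor <;> linarith)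
    rw [abs_of_nonneg (by linarith : 0 ≤ z)] at this
    linarith [(abs_sub_le_iff.1 this).1]
  have hΓ := secant_le_Gamma_add_one h₁
  nlinarith [mul_nonneg (sub_nonneg.2 h₁) (sub_nonneg.2 h₂),
    mul_nonneg (mul_nonneg (sub_nonneg.2 h₁) (sub_nonneg.2 h₂)) (sq_nonneg z),
    mul_nonneg (sub_nonneg.2 hπ.le) (by linarith : (0 : ℝ) ≤ z)]

/-- For `A x = Γ (x + 1)` and `B x = cos x`, no L₁-iterated sequence of the
family is eventually periodic. -/
theorem L1Seq_gamma_cos_not_eventually_periodic (a : ℝ) :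
    ¬ ∃ p : ℕ, 0 < p ∧ ∃ N : ℕ, ∀ n : ℕ, N ≤ n →
      L1Seq (fun x => Real.Gamma (x + 1)) Real.cos a (n + p) =
        L1Seq (fun x => Real.Gamma (x + 1)) Real.cos a n := by
  rintro ⟨p, hp, N, hper⟩
  set U := L1Seq (fun x => Gamma (x + 1)) cos a
  obtain ⟨n₁, hn₁, -, hne₁⟩ := exists_thueMorse_ne_add_of_modEq hp N 0
  obtain ⟨n₂, hn₂, hmod₂, hne₂⟩ := exists_thueMorse_ne_add_of_modEq hp N (n₁ + 1)
  obtain ⟨n₃, hn₃, hmod₃, hne₃⟩ := exists_thueMorse_ne_add_of_modEq hp N (n₂ + 1)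
  have hU₂ : U n₂ = cos (U n₁) :=
    (eq_of_modEq_of_forall_add_eq hper hn₂ (by omega) hmod₂).trans
      (L1Seq_succ_eq_of_thueMorse_ne hper hn₁ hne₁).2
  have hU₃ : U n₃ = cos (cos (U n₁)) :=
    (eq_of_modEq_of_forall_add_eq hper hn₃ (by omega) hmod₃).trans
      ((L1Seq_succ_eq_of_thueMorse_ne hper hn₂ hne₂).2.trans (congrArg cos hU₂))
  obtain ⟨hA, hB⟩ := L1Seq_succ_eq_of_thueMorse_ne hper hn₃ hne₃
  have hlt : cos (U n₃) < Gamma (U n₃ + 1) :=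
    cos_lt_Gamma_add_one (hU₃ ▸ half_le_cos_cos _) (hU₃ ▸ cos_le_one _)
  exact hlt.ne (hB.symm.trans hA)
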